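/- Let $n, k$ be positive integers and $a_1,\dots,a_n$ positive integers. For each $i$, let $x^{(i)}_0,\dots,x^{(i)}_{a_i}$ and $y^{(i)}_0,\dots,y^{(i)}_{a_i}$ be elements of a commutative ring, and define band matrices $f_{2i-1}, f_{2i}$ of size $k \times (a_i+k)$ and $g_{2i-1}, g_{2i}$ of size $(a_i+k) \times k$ as in the paper: $(f_{2i-1})_{r,s} = y^{(i)}_{a_i-(s-r)}$ and $(f_{2i})_{r,s} = x^{(i)}_{a_i-(s-r)}$ for $0 \le s-r \le a_i$ (zero otherwise), $(g_{2i-1})_{r,s} = x^{(i)}_{r-s}$ and $(g_{2i})_{r,s} = y^{(i)}_{r-s}$ for $0 \le r-s \le a_i$ (zero otherwise). Let $f = [f_1 \; -f_2 \; f_3 \; -f_4 \; \cdots \; f_{2n-1} \; -f_{2n}]$ be the block-row matrix and $g$ the block-column matrix with blocks $g_1, g_2, \dots, g_{2n}$. Then $f \cdot g = 0$. -/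

import Mathlib

/-!
Entry `(r, c)` of `f₂ₜ₋₁ g₂ₜ₋₁` is `∑ₛ y_{a-(s-r)} x_{s-c}` and that of `f₂ₜ g₂ₜ` is
`∑ₛ x_{a-(s-r)} y_{s-c}`, both over the `s` with `0 ≤ s - r, s - c ≤ a`. The reflection
`s ↦ a + r + c - s` preserves this range and turns each summand of the first sum into the
corresponding summand of the second, so `f₂ₜ₋₁ g₂ₜ₋₁ = f₂ₜ g₂ₜ` and every block of `f g` cancels.
-/

open Function

theorem Fin.sum_univ_eq_finsum_int {M : Type*} [AddCommMonoid M] (N : ℕ) (h : ℤ → M)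
    (hh : support h ⊆ Set.Ico 0 N) : ∑ s : Fin N, h s = ∑ᶠ s, h s := by
  rw [Fin.sum_univ_eq_sum_range (fun s => h s) N,
    finsum_eq_sum_of_support_subset h (s := (Finset.range N).map Nat.castEmbedding) ?_,
    Finset.sum_map]
  · rfl
  intro m hm
  obtain ⟨h0, hN⟩ := hh hm
  simp only [Finset.coe_map, Finset.coe_range, Set.mem_image, Set.mem_Iio]
  exact ⟨m.toNat, by omega, by simp [h0]⟩

section Band

variable {R : Type*} [CommRing R]

/-- The product `(f)_{r,s} (g)_{s,c}` of the band entries `(f)_{r,s} = u_{a-(s-r)}` and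
`(g)_{s,c} = v_{s-c}`. -/
def bandProd (a r c : ℤ) (u v : ℤ → R) (s : ℤ) : R :=
  (if 0 ≤ s - r ∧ s - r ≤ a then u (a - (s - r)) else 0) *
    (if 0 ≤ s - c ∧ s - c ≤ a then v (s - c) else 0)

theorem bandProd_reflect (a r c : ℤ) (u v : ℤ → R) (s : ℤ) :
    bandProd a r c u v (a + r + c - s) = bandProd a r c v u s := by
  have hr : a + r + c - s - r = a - (s - c) := by ring
  have hc : a + r + c - s - c = a - (s - r) := by ring
  have hu : a - (a - (s - c)) = s - c := by ring
  unfold bandProd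
  rw [hr, hc, hu, mul_comm]
  congr 1 <;> congr 1 <;> simp only [eq_iff_iff] <;> omega

theorem support_bandProd_subset (a r c : ℤ) (u v : ℤ → R) :
    support (bandProd a r c u v) ⊆ Set.Icc r (a + r) := by
  intro s hs
  by_contra hout
  apply hs
  rw [bandProd, if_neg (by rw [Set.mem_Icc] at hout; omega), zero_mul]

theorem sum_bandProd_comm (a k : ℕ) (r c : Fin k) (u v : ℤ → R) :
    ∑ s : Fin (a + k), bandProd a r c u v s = ∑ s : Fin (a + k), bandProd a r c v u s := by
  have hsupp : ∀ u v : ℤ → R, support (bandProd a r c u v) ⊆ Set.Ico 0 (a + k : ℕ) :=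
    fun u v => (support_bandProd_subset _ _ _ u v).trans fun s hs => by
      obtain ⟨h0, h1⟩ := hs; constructor <;> push_cast <;> omega
  rw [Fin.sum_univ_eq_finsum_int _ _ (hsupp u v), Fin.sum_univ_eq_finsum_int _ _ (hsupp v u),
    ← finsum_comp_equiv (Equiv.subLeft ((a : ℤ) + r + c))]
  exact finsum_congr (bandProd_reflect _ _ _ u v)

end Band

theorem stmt_2_general (R : Type*) [CommRing R] (n k : ℕ)
    (a : Fin n → ℕ)
    (x y : (i : Fin n) → ℤ → R)
    (f : Matrix (Fin k) ((t : Fin n) × (Fin 2 × Fin (a t + k))) R)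
    (g : Matrix ((t : Fin n) × (Fin 2 × Fin (a t + k))) (Fin k) R)
    (hf : ∀ (r : Fin k) (t : Fin n) (b : Fin 2) (s : Fin (a t + k)),
      f r ⟨t, b, s⟩ =
        if 0 ≤ (s : ℤ) - (r : ℤ) ∧ (s : ℤ) - (r : ℤ) ≤ (a t : ℤ) then
          (if b = 0 then y t ((a t : ℤ) - ((s : ℤ) - (r : ℤ)))
           else - x t ((a t : ℤ) - ((s : ℤ) - (r : ℤ))))
        else 0)
    (hg : ∀ (t : Fin n) (b : Fin 2) (s : Fin (a t + k)) (c : Fin k),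
      g ⟨t, b, s⟩ c =
        if 0 ≤ (s : ℤ) - (c : ℤ) ∧ (s : ℤ) - (c : ℤ) ≤ (a t : ℤ) then
          (if b = 0 then x t ((s : ℤ) - (c : ℤ)) else y t ((s : ℤ) - (c : ℤ)))
        else 0) :
    f * g = 0 := by
  ext r c
  have hblock0 : ∀ t s, f r ⟨t, 0, s⟩ * g ⟨t, 0, s⟩ c = bandProd (a t) r c (y t) (x t) s := by
    intro t s
    simp only [hf, hg, bandProd, if_true]
  have hblock1 : ∀ t s, f r ⟨t, 1, s⟩ * g ⟨t, 1, s⟩ c = -bandProd (a t) r c (x t) (y t) s := by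
    intro t s
    simp only [hf, hg, bandProd, Fin.one_eq_zero_iff, if_false, OfNat.ofNat_ne_one]
    split_ifs <;> ring
  rw [Matrix.mul_apply, Matrix.zero_apply, Fintype.sum_sigma]
  refine Finset.sum_eq_zero fun t _ => ?_
  rw [Fintype.sum_prod_type, Fin.sum_univ_two]
  simp only [hblock0, hblock1, Finset.sum_neg_distrib, sum_bandProd_comm (a t) k r c (x t),
    add_neg_cancel]

/-- Lemma 3.4(a): the block-row matrix `f = [f₁ -f₂ f₃ -f₄ ⋯ f₂ₙ₋₁ -f₂ₙ]` composed with the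
block-column matrix `g` with blocks `g₁,…,g₂ₙ` is zero.  The column index of `f` (= row index
of `g`) is `(t : Fin n) × (Fin 2 × Fin (a t + k))`: block `t`, with `b = 0` corresponding to
the blocks `f₂ₜ₋₁`/`g₂ₜ₋₁` and `b = 1` to `f₂ₜ`/`g₂ₜ`. -/
theorem stmt_2 (R : Type*) [CommRing R] (n k : ℕ) (hn : 0 < n) (hk : 0 < k)
    (a : Fin n → ℕ) (ha : ∀ i, 0 < a i)
    (x y : (i : Fin n) → ℤ → R)
    (f : Matrix (Fin k) ((t : Fin n) × (Fin 2 × Fin (a t + k))) R)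
    (g : Matrix ((t : Fin n) × (Fin 2 × Fin (a t + k))) (Fin k) R)
    (hf : ∀ (r : Fin k) (t : Fin n) (b : Fin 2) (s : Fin (a t + k)),
      f r ⟨t, b, s⟩ =
        if 0 ≤ (s : ℤ) - (r : ℤ) ∧ (s : ℤ) - (r : ℤ) ≤ (a t : ℤ) then
          (if b = 0 then y t ((a t : ℤ) - ((s : ℤ) - (r : ℤ)))
           else - x t ((a t : ℤ) - ((s : ℤ) - (r : ℤ))))
        else 0)
    (hg : ∀ (t : Fin n) (b : Fin 2) (s : Fin (a t + k)) (c : Fin k),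
      g ⟨t, b, s⟩ c =
        if 0 ≤ (s : ℤ) - (c : ℤ) ∧ (s : ℤ) - (c : ℤ) ≤ (a t : ℤ) then
          (if b = 0 then x t ((s : ℤ) - (c : ℤ)) else y t ((s : ℤ) - (c : ℤ)))
        else 0) :
    f * g = 0 :=
  stmt_2_general R n k a x y f g hf hg
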